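/- arXiv:2010.06037 — 2 statements merged into one kernel-verified Lean document; each statement's English description precedes it below -/
import Mathlib

section
/- If D is an unambiguous ECS, then for every node v, the number of full output trees rooted at v equals |L_D(v)|; i.e., the print function is a bijection from full output trees rooted at v to L_D(v). -/
/-- Labels of ECS nodes: an alphabet symbol (leaf), a union node, or a product node. -/
inductive ECSLabel (S : Type*)
  | sym (a : S)
  | union
  | prod

/-- A label is an inner label if it is `union` or `prod`. -/
def ECSLabel.isInner {S : Type*} : ECSLabel S → Prop
  | .sym _ => False
  | .union => True
  | .prod => True

/-- An Enumerable Compact Set (ECS): a DAG over the node type `V`, with leaves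
labeled by alphabet symbols and inner nodes labeled `∪` or `⊙` with left and right
children.  Acyclicity is witnessed by a rank function decreasing along edges. -/
structure ECS (S V : Type*) where
  label : V → ECSLabel S
  l : V → V
  r : V → V
  rank : V → ℕ
  rank_l : ∀ v, (label v).isInner → rank (l v) < rank v
  rank_r : ∀ v, (label v).isInner → rank (r v) < rank v

namespace ECS

variable {S V : Type*}

/-- `D.Lang v w`: the word `w` belongs to the set `L_D(v)` represented at node `v`. -/
inductive Lang (D : ECS S V) : V → List S → Prop
  | sym {v : V} {a : S} : D.label v = ECSLabel.sym a → Lang D v [a]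
  | unionL {v : V} {w : List S} : D.label v = ECSLabel.union →
      Lang D (D.l v) w → Lang D v w
  | unionR {v : V} {w : List S} : D.label v = ECSLabel.union →
      Lang D (D.r v) w → Lang D v w
  | prod {v : V} {w₁ w₂ : List S} : D.label v = ECSLabel.prod →
      Lang D (D.l v) w₁ → Lang D (D.r v) w₂ → Lang D v (w₁ ++ w₂)

end ECS

/-- Output trees over the node type `V` of an ECS. -/
inductive OTree (V : Type*)
  | leaf (v : V)
  | un (v : V) (t : OTree V)
  | pr (v : V) (t₁ t₂ : OTree V)

namespace OTree

variable {V : Type*}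

/-- The root node of an output tree. -/
def root : OTree V → V
  | .leaf v => v
  | .un v _ => v
  | .pr v _ _ => v

/-- The number of nodes of an output tree. -/
def size : OTree V → ℕ
  | .leaf _ => 1
  | .un _ t => t.size + 1
  | .pr _ t₁ t₂ => t₁.size + t₂.size + 1

end OTree

namespace ECS

variable {S V : Type*}

/-- Full output trees of an ECS `D`: leaves sit at leaf nodes, a union node has one
child rooted at its left or right child, and a product node has two children rooted
at its left and right children respectively. -/
inductive Full (D : ECS S V) : OTree V → Prop
  | leaf {v : V} {a : S} : D.label v = ECSLabel.sym a → Full D (.leaf v)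
  | un {v : V} {t : OTree V} : D.label v = ECSLabel.union →
      (t.root = D.l v ∨ t.root = D.r v) → Full D t → Full D (.un v t)
  | pr {v : V} {t₁ t₂ : OTree V} : D.label v = ECSLabel.prod →
      t₁.root = D.l v → t₂.root = D.r v → Full D t₁ → Full D t₂ →
      Full D (.pr v t₁ t₂)

/-- The word printed by an output tree. -/
def print (D : ECS S V) : OTree V → List S
  | .leaf v => match D.label v with | .sym a => [a] | _ => []
  | .un _ t => D.print t
  | .pr _ t₁ t₂ => D.print t₁ ++ D.print t₂

/-- An ECS is unambiguous: the two branches of a union node are disjoint, and words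
at product nodes decompose uniquely. -/
def Unambiguous (D : ECS S V) : Prop :=
  (∀ v, D.label v = ECSLabel.union →
    ∀ w, ¬ (D.Lang (D.l v) w ∧ D.Lang (D.r v) w)) ∧
  (∀ v, D.label v = ECSLabel.prod →
    ∀ w₁ w₂ w₁' w₂', D.Lang (D.l v) w₁ → D.Lang (D.r v) w₂ →
      D.Lang (D.l v) w₁' → D.Lang (D.r v) w₂' →
      w₁ ++ w₂ = w₁' ++ w₂' → w₁ = w₁' ∧ w₂ = w₂')

end ECS

/-! Reading a full output tree bottom-up is a derivation of its print in `L_D(root)`, and every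
derivation arises this way, so `print` maps onto `L_D(v)`. It is injective because in an unambiguous
ECS the print fixes, at every union node, the branch taken, and at every product node, the split
of the word between the two children. -/

namespace ECS

variable {S V : Type*} {D : ECS S V}

theorem Full.lang_root_print {T : OTree V} (hT : D.Full T) : D.Lang T.root (D.print T) := by
  induction hT with
  | leaf h => simpa only [print, OTree.root, h] using Lang.sym h
  | un h hbranch _ ih =>
    rcases hbranch with hroot | hroot
    · exact Lang.unionL h (hroot ▸ ih)
    · exact Lang.unionR h (hroot ▸ ih)
  | pr h hroot₁ hroot₂ _ _ ih₁ ih₂ => exact Lang.prod h (hroot₁ ▸ ih₁) (hroot₂ ▸ ih₂)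

theorem Lang.exists_full {v : V} {w : List S} (h : D.Lang v w) :
    ∃ T : OTree V, D.Full T ∧ T.root = v ∧ D.print T = w := by
  induction h with
  | sym h => exact ⟨.leaf _, .leaf h, rfl, by simp only [print, h]⟩
  | unionL h _ ih =>
    obtain ⟨T, hT, hroot, hprint⟩ := ih
    exact ⟨.un _ T, .un h (.inl hroot) hT, rfl, hprint⟩
  | unionR h _ ih =>
    obtain ⟨T, hT, hroot, hprint⟩ := ih
    exact ⟨.un _ T, .un h (.inr hroot) hT, rfl, hprint⟩
  | prod h _ _ ih₁ ih₂ =>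
    obtain ⟨T₁, hT₁, hroot₁, rfl⟩ := ih₁
    obtain ⟨T₂, hT₂, hroot₂, rfl⟩ := ih₂
    exact ⟨.pr _ T₁ T₂, .pr h hroot₁ hroot₂ hT₁ hT₂, rfl, rfl⟩

theorem Unambiguous.branch_unique (hD : D.Unambiguous) {v u u' : V} {w : List S}
    (hv : D.label v = .union) (hu : u = D.l v ∨ u = D.r v) (hu' : u' = D.l v ∨ u' = D.r v)
    (hw : D.Lang u w) (hw' : D.Lang u' w) : u = u' := by
  rcases hu with rfl | rfl <;> rcases hu' with rfl | rfl
  · rfl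
  · exact (hD.1 v hv w ⟨hw, hw'⟩).elim
  · exact (hD.1 v hv w ⟨hw', hw⟩).elim
  · rfl

theorem Full.eq_of_root_eq_of_print_eq (hD : D.Unambiguous) {T T' : OTree V}
    (hT : D.Full T) (hT' : D.Full T') (hroot : T.root = T'.root)
    (hprint : D.print T = D.print T') : T = T' := by
  induction hT generalizing T' with
  | leaf h =>
    cases hT' with
    | leaf => cases hroot; rfl
    | un h' | pr h' => cases hroot; cases h.symm.trans h'
  | un h hbranch ht ih =>
    cases hT' with
    | leaf h' | pr h' => cases hroot; cases h.symm.trans h'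
    | un _ hbranch' ht' =>
      cases hroot
      have hprint_t : D.print _ = D.print _ := hprint
      have hroot_t := hD.branch_unique h hbranch hbranch' ht.lang_root_print
        (hprint_t ▸ ht'.lang_root_print)
      rw [ih ht' hroot_t hprint_t]
  | pr h hroot₁ hroot₂ ht₁ ht₂ ih₁ ih₂ =>
    cases hT' with
    | leaf h' | un h' => cases hroot; cases h.symm.trans h'
    | pr _ hroot₁' hroot₂' ht₁' ht₂' =>
      cases hroot
      obtain ⟨hprint₁, hprint₂⟩ := hD.2 _ h _ _ _ _
        (hroot₁ ▸ ht₁.lang_root_print) (hroot₂ ▸ ht₂.lang_root_print)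
        (hroot₁' ▸ ht₁'.lang_root_print) (hroot₂' ▸ ht₂'.lang_root_print) hprint
      rw [ih₁ ht₁' (hroot₁.trans hroot₁'.symm) hprint₁,
        ih₂ ht₂' (hroot₂.trans hroot₂'.symm) hprint₂]

end ECS

/-- In an unambiguous ECS, `print` is a bijection from the full output trees rooted
at `v` onto the set `L_D(v)`; in particular the number of full output trees rooted
at `v` equals `|L_D(v)|`. -/
theorem ecs_print_bijOn {S V : Type*} (D : ECS S V) (hD : D.Unambiguous) (v : V) :
    Set.BijOn (fun T => D.print T) {T : OTree V | D.Full T ∧ T.root = v}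
      {w | D.Lang v w} := by
  refine ⟨?_, ?_, ?_⟩
  · rintro T ⟨hT, rfl⟩
    exact hT.lang_root_print
  · rintro T ⟨hT, hroot⟩ T' ⟨hT', hroot'⟩ hprint
    exact hT.eq_of_root_eq_of_print_eq hD hT' (hroot.trans hroot'.symm) hprint
  · intro w hw
    obtain ⟨T, hT, hroot, hprint⟩ := hw.exists_full
    exact ⟨T, ⟨hT, hroot⟩, hprint⟩
end

section
/- Applying the union gadget to two safe nodes of a 2-bounded ECS yields a 2-bounded ECS and the produced node is safe: if v3 and v4 are safe union nodes of a 2-bounded ECS D, and D' extends D with fresh union nodes v', v'', v* where ℓ(v')=ℓ(v3), r(v')=v'', ℓ(v'')=ℓ(v4), r(v'')=v*, ℓ(v*)=r(v3), r(v*)=r(v4), then L_{D'}(v') = L_D(v3) ∪ L_D(v4), D' is 2-bounded, and v' is safe in D'. -/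
namespace ECS

variable {S V : Type*}

/-- The (left) output-depth of a node: `0` for leaves and product nodes, and one
more than the output-depth of the left child for union nodes. -/
def odepth (D : ECS S V) (v : V) : ℕ :=
  match h : D.label v with
  | .union => D.odepth (D.l v) + 1
  | .sym _ => 0
  | .prod => 0
termination_by D.rank v
decreasing_by exact D.rank_l v (by rw [h]; trivial)

/-- An ECS is `k`-bounded if every node has output-depth at most `k`. -/
def kBounded (D : ECS S V) (k : ℕ) : Prop :=
  ∀ v, D.odepth v ≤ k

open Classical in
/-- The tilt operation on output trees: bypass every union node whose child is
rooted at the right child. -/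
noncomputable def tilt (D : ECS S V) : OTree V → OTree V
  | .leaf v => .leaf v
  | .un v t => if t.root = D.l v then .un v (D.tilt t) else D.tilt t
  | .pr v t₁ t₂ => .pr v (D.tilt t₁) (D.tilt t₂)

/-- Output trees of an ECS (not necessarily full). -/
inductive IsOTree (D : ECS S V) : OTree V → Prop
  | leaf {v : V} {a : S} : D.label v = ECSLabel.sym a → IsOTree D (.leaf v)
  | un {v : V} {t : OTree V} : D.label v = ECSLabel.union →
      IsOTree D t → IsOTree D (.un v t)
  | pr {v : V} {t₁ t₂ : OTree V} : D.label v = ECSLabel.prod →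
      IsOTree D t₁ → IsOTree D t₂ → IsOTree D (.pr v t₁ t₂)

end ECS

namespace ECS

variable {S V : Type*}

/-- A node is safe if its output-depth is at most `1`, and when it equals `1` the
output-depth of its right child is also at most `1`. -/
def Safe (D : ECS S V) (v : V) : Prop :=
  D.odepth v ≤ 1 ∧ (D.odepth v = 1 → D.odepth (D.r v) ≤ 1)

end ECS

/-!
Since `Sum.inl` embeds `D` into `D'` preserving labels and children, old nodes keep their
languages and output-depths. Unfolding the chain `v' → v'' → v*` shows that `v'` is the union of
`ℓ(v₃)`, `ℓ(v₄)`, `r(v₃)`, `r(v₄)`, i.e. of `L(v₃) ∪ L(v₄)`. Safety of the union nodes `v₃`, `v₄`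
says their left children have output-depth `0` and their right children at most `1`; hence `v'`
and `v''` have output-depth `1` and `v*` at most `2`, and `v'` is safe because `r(v') = v''`.
-/

namespace ECS

variable {S V W : Type*}

lemma odepth_of_union {D : ECS S V} {v : V} (h : D.label v = .union) :
    D.odepth v = D.odepth (D.l v) + 1 := by
  rw [odepth]; split <;> simp_all

lemma odepth_of_sym {D : ECS S V} {v : V} {a : S} (h : D.label v = .sym a) :
    D.odepth v = 0 := by
  rw [odepth]; split <;> simp_all

lemma odepth_of_prod {D : ECS S V} {v : V} (h : D.label v = .prod) :
    D.odepth v = 0 := by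
  rw [odepth]; split <;> simp_all

lemma lang_union_iff {D : ECS S V} {v : V} (h : D.label v = .union) {w : List S} :
    D.Lang v w ↔ D.Lang (D.l v) w ∨ D.Lang (D.r v) w := by
  refine ⟨fun hw => ?_, fun hw => hw.elim (.unionL h) (.unionR h)⟩
  cases hw with
  | sym hs | prod hs => rw [h] at hs; cases hs
  | unionL _ hw => exact .inl hw
  | unionR _ hw => exact .inr hw

lemma safe_iff_of_union {D : ECS S V} {v : V} (h : D.label v = .union) :
    D.Safe v ↔ D.odepth (D.l v) = 0 ∧ D.odepth (D.r v) ≤ 1 := by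
  simp only [Safe, odepth_of_union h]
  omega

structure IsHom (D : ECS S V) (D' : ECS S W) (f : V → W) : Prop where
  label_map : ∀ v, D'.label (f v) = D.label v
  l_map : ∀ v, D'.l (f v) = f (D.l v)
  r_map : ∀ v, D'.r (f v) = f (D.r v)

namespace IsHom

variable {D : ECS S V} {D' : ECS S W} {f : V → W}

lemma lang_of_lang (hf : D.IsHom D' f) {v : V} {w : List S} (hw : D.Lang v w) :
    D'.Lang (f v) w := by
  induction hw with
  | sym h => exact .sym (by rw [hf.label_map, h])
  | unionL h _ ih => exact .unionL (by rw [hf.label_map, h]) (by rwa [hf.l_map])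
  | unionR h _ ih => exact .unionR (by rw [hf.label_map, h]) (by rwa [hf.r_map])
  | prod h _ _ ih₁ ih₂ =>
    exact .prod (by rw [hf.label_map, h]) (by rwa [hf.l_map]) (by rwa [hf.r_map])

lemma lang_of_lang_map (hf : D.IsHom D' f) {u : W} {w : List S} (hw : D'.Lang u w) :
    ∀ v, f v = u → D.Lang v w := by
  induction hw with
  | sym h => rintro v rfl; exact .sym (by rwa [← hf.label_map])
  | unionL h _ ih =>
    rintro v rfl; exact .unionL (by rwa [← hf.label_map]) (ih _ (hf.l_map v).symm)
  | unionR h _ ih =>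
    rintro v rfl; exact .unionR (by rwa [← hf.label_map]) (ih _ (hf.r_map v).symm)
  | prod h _ _ ih₁ ih₂ =>
    rintro v rfl
    exact .prod (by rwa [← hf.label_map]) (ih₁ _ (hf.l_map v).symm) (ih₂ _ (hf.r_map v).symm)

lemma lang_iff (hf : D.IsHom D' f) {v : V} {w : List S} : D'.Lang (f v) w ↔ D.Lang v w :=
  ⟨fun hw => hf.lang_of_lang_map hw v rfl, hf.lang_of_lang⟩

lemma odepth_eq (hf : D.IsHom D' f) (v : V) : D'.odepth (f v) = D.odepth v := by
  induction hv : D.rank v using Nat.strong_induction_on generalizing v with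
  | _ n ih =>
    cases h : D.label v with
    | sym a => rw [odepth_of_sym h, odepth_of_sym (by rw [hf.label_map, h])]
    | prod => rw [odepth_of_prod h, odepth_of_prod (by rw [hf.label_map, h])]
    | union =>
      rw [odepth_of_union h, odepth_of_union (by rw [hf.label_map, h]), hf.l_map,
        ih _ (hv ▸ D.rank_l v (by rw [h]; trivial)) _ rfl]

end IsHom

end ECS

open ECS in
/-- The union gadget: extending a `2`-bounded ECS `D` with fresh union nodes
`v' = inr 0`, `v'' = inr 1`, `v* = inr 2` wired as `ℓ(v') = ℓ(v₃)`, `r(v') = v''`,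
`ℓ(v'') = ℓ(v₄)`, `r(v'') = v*`, `ℓ(v*) = r(v₃)`, `r(v*) = r(v₄)` yields
`L(v') = L(v₃) ∪ L(v₄)`, a `2`-bounded ECS, and a safe node `v'`. -/
theorem ecs_union_gadget {S V : Type*} (D : ECS S V) (v₃ v₄ : V)
    (hbound : D.kBounded 2)
    (h₃ : D.label v₃ = ECSLabel.union) (h₄ : D.label v₄ = ECSLabel.union)
    (hs₃ : D.Safe v₃) (hs₄ : D.Safe v₄)
    (D' : ECS S (V ⊕ Fin 3))
    (hlab : ∀ v : V, D'.label (Sum.inl v) = D.label v)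
    (hl : ∀ v : V, D'.l (Sum.inl v) = Sum.inl (D.l v))
    (hr : ∀ v : V, D'.r (Sum.inl v) = Sum.inl (D.r v))
    (hlab' : ∀ i : Fin 3, D'.label (Sum.inr i) = ECSLabel.union)
    (hl0 : D'.l (Sum.inr 0) = Sum.inl (D.l v₃)) (hr0 : D'.r (Sum.inr 0) = Sum.inr 1)
    (hl1 : D'.l (Sum.inr 1) = Sum.inl (D.l v₄)) (hr1 : D'.r (Sum.inr 1) = Sum.inr 2)
    (hl2 : D'.l (Sum.inr 2) = Sum.inl (D.r v₃)) (hr2 : D'.r (Sum.inr 2) = Sum.inl (D.r v₄)) :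
    {w | D'.Lang (Sum.inr 0) w} = {w | D.Lang v₃ w} ∪ {w | D.Lang v₄ w} ∧
    D'.kBounded 2 ∧
    D'.Safe (Sum.inr 0) := by
  have hf : D.IsHom D' Sum.inl := ⟨hlab, hl, hr⟩
  have hU : ∀ i w, D'.Lang (.inr i) w ↔ D'.Lang (D'.l (.inr i)) w ∨ D'.Lang (D'.r (.inr i)) w :=
    fun i _ => lang_union_iff (hlab' i)
  obtain ⟨hl₃, hr₃⟩ := (safe_iff_of_union h₃).1 hs₃
  obtain ⟨hl₄, -⟩ := (safe_iff_of_union h₄).1 hs₄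
  have hdepth_l : ∀ i, D'.odepth (D'.l (.inr i)) ≤ 1 := by
    intro i
    fin_cases i
    · simp only [Fin.zero_eta, hl0, hf.odepth_eq, hl₃, zero_le]
    · simp only [Fin.mk_one, hl1, hf.odepth_eq, hl₄, zero_le]
    · simpa [hl2, hf.odepth_eq] using hr₃
  refine ⟨?_, ?_, (safe_iff_of_union (hlab' 0)).2 ⟨?_, ?_⟩⟩
  · ext w
    simp only [Set.mem_ofPred_eq, Set.mem_union, hU, lang_union_iff h₃, lang_union_iff h₄,
      hl0, hr0, hl1, hr1, hl2, hr2, hf.lang_iff]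
    tauto
  · rintro (v | i)
    · exact hf.odepth_eq v ▸ hbound v
    · rw [odepth_of_union (hlab' i)]
      exact Nat.succ_le_succ (hdepth_l i)
  · rw [hl0, hf.odepth_eq, hl₃]
  · rw [hr0, odepth_of_union (hlab' 1), hl1, hf.odepth_eq, hl₄]
end
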